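/- For every k ≥ 1, aw(P_3 □ P_{2k+1}, 3) = 3; that is, every exact 3-coloring of the grid P_3 □ P_{2k+1} contains a rainbow 3-AP, while some exact 2-coloring does not. -/

import Mathlib

open SimpleGraph

/-- `v` lists the vertices of a `k`-term arithmetic progression in `G`:
consecutive vertices are at a common distance `d`. -/
def IsAPIn {V : Type*} (G : SimpleGraph V) (k : ℕ) (v : Fin k → V) : Prop :=
  ∃ d : ℕ, ∀ (i : ℕ) (h : i + 1 < k),
    G.dist (v ⟨i, by omega⟩) (v ⟨i + 1, h⟩) = d

/-- The coloring `c` admits a rainbow `k`-AP in `G`: a `k`-AP whose vertices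
are pairwise distinct and receive pairwise distinct colors. -/
def HasRainbowAP {V α : Type*} (G : SimpleGraph V) (k : ℕ) (c : V → α) : Prop :=
  ∃ v : Fin k → V, IsAPIn G k v ∧ Function.Injective (c ∘ v)

/-- The anti-van der Waerden number `aw(G,k)`: the least positive `r` such that
every exact `r`-coloring of `G` contains a rainbow `k`-AP.  (For `r = |V(G)|+1`
there is no surjection onto `r` colors, so the defining set is nonempty and
`aw(G,k) ≤ |V(G)|+1` automatically, matching the convention.) -/
noncomputable def aw {V : Type*} [Fintype V] (G : SimpleGraph V) (k : ℕ) : ℕ :=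
  sInf {r : ℕ | 0 < r ∧ ∀ c : V → Fin r, Function.Surjective c → HasRainbowAP G k c}

/-!
A colouring with fewer than three colours has no rainbow 3-AP, so the content is that every
colouring of the `3 × n` grid (`n` odd) taking three values has one. Induct on `n`: if the
interior columns `1, …, n - 2` already take three values, they form a `3 × (n - 2)` grid whose
APs are APs of the whole grid. Otherwise some colour `γ` occurs only in the two end columns, and
by the symmetries of the grid it occurs in column `0`. If it sits at `(1, 0)`, APs from `(1, 0)`
to `(0, 1)` and `(2, 1)` confine every cell to two colours. If it sits at the corner `(0, 0)`,
APs through `(0, 0)` and `(1, 1)` confine the top row and column `0`, and either every cell is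
confined to two colours or the middle row is monochromatic and a third colour in the bottom row
completes a rainbow AP with `(0, 0)` and a middle-row cell; the odd length of the rows is what
makes the latter AP fit.
-/

open Function

namespace SimpleGraph

lemma dist_boxProd {α β : Type*} {G : SimpleGraph α} {H : SimpleGraph β} (hG : G.Preconnected)
    (hH : H.Preconnected) (x y : α × β) :
    (G □ H).dist x y = G.dist x.1 y.1 + H.dist x.2 y.2 :=
  (congrArg ENat.toNat (edist_boxProd x y)).trans <|
    ENat.toNat_add (edist_ne_top_iff_reachable.2 (hG _ _)) (edist_ne_top_iff_reachable.2 (hH _ _))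

lemma Walk.dist_val_le_length {n : ℕ} {a b : Fin n} (w : (pathGraph n).Walk a b) :
    Nat.dist a b ≤ w.length := by
  induction w with
  | nil => simp
  | cons hadj _ ih =>
    rw [pathGraph_adj] at hadj
    simp only [Walk.length_cons, Nat.dist] at ih ⊢
    omega

lemma pathGraph_dist_le {n : ℕ} (a b : Fin n) : (pathGraph n).dist a b ≤ Nat.dist a b := by
  wlog hab : a ≤ b generalizing a b
  · rw [dist_comm, Nat.dist_comm]
    exact this b a (le_of_not_ge hab)
  obtain ⟨t, ht⟩ : ∃ t, b.val = a.val + t := ⟨b - a, by omega⟩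
  induction t generalizing a with
  | zero => simp [Fin.ext (ht.trans (Nat.add_zero _)).symm]
  | succ t ih =>
    let a' : Fin n := ⟨a + 1, by omega⟩
    have hadj : (pathGraph n).Adj a a' := pathGraph_adj.2 (Or.inl rfl)
    calc (pathGraph n).dist a b ≤ (pathGraph n).dist a a' + (pathGraph n).dist a' b :=
          hadj.reachable.dist_triangle_left b
      _ ≤ 1 + Nat.dist a' b := by
          rw [dist_eq_one_iff_adj.2 hadj]
          exact Nat.add_le_add_left (ih a' (Fin.mk_le_mk.2 (by omega)) (by simp [a']; omega)) 1
      _ = Nat.dist a b := by simp only [Nat.dist, a']; omega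

lemma pathGraph_dist {n : ℕ} (a b : Fin n) : (pathGraph n).dist a b = Nat.dist a b := by
  refine le_antisymm (pathGraph_dist_le a b) ?_
  obtain ⟨w, hw⟩ := (pathGraph_preconnected n a b).exists_walk_length_eq_dist
  exact hw ▸ w.dist_val_le_length

end SimpleGraph

lemma hasRainbowAP_three {V α : Type*} {G : SimpleGraph V} {c : V → α} {x y z : V}
    (hd : G.dist x y = G.dist y z) (hxy : c x ≠ c y) (hyz : c y ≠ c z) (hxz : c x ≠ c z) :
    HasRainbowAP G 3 c := by
  refine ⟨![x, y, z], ⟨G.dist x y, fun i hi => ?_⟩, fun a b hab => ?_⟩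
  · obtain rfl | rfl : i = 0 ∨ i = 1 := by omega
    · rfl
    · exact hd.symm
  · fin_cases a <;> fin_cases b <;> simp_all [eq_comm]

lemma aw_eq_self {V : Type*} [Fintype V] {G : SimpleGraph V} {k : ℕ} (hk : 0 < k)
    (hV : k - 1 ≤ Fintype.card V) (h : ∀ c : V → Fin k, Surjective c → HasRainbowAP G k c) :
    aw G k = k := by
  refine le_antisymm (Nat.sInf_le ⟨hk, h⟩) (le_csInf ⟨k, hk, h⟩ ?_)
  rintro r ⟨hr, hrainbow⟩
  by_contra! hrk
  have : Nonempty (Fin r) := ⟨⟨0, hr⟩⟩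
  obtain ⟨e⟩ := Embedding.nonempty_of_card_le (α := Fin r) (β := V) (by simp; omega)
  obtain ⟨v, -, hinj⟩ := hrainbow _ (invFun_surjective e.injective)
  exact hrk.not_ge (by simpa using Fintype.card_le_of_injective _ hinj)

def taxicabDist (p q : ℕ × ℕ) : ℕ := Nat.dist p.1 q.1 + Nat.dist p.2 q.2

-- The vertex `(i, j)` of `P₃ □ Pₙ` is the point `(i, j)` of `grid3 n`; graph distance becomes
-- `taxicabDist`, and the symmetries of the grid become arithmetic on coordinates.
def grid3 (n : ℕ) : Set (ℕ × ℕ) := Set.Iio 3 ×ˢ Set.Iio n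

@[simp] lemma mem_grid3 {n : ℕ} {p : ℕ × ℕ} : p ∈ grid3 n ↔ p.1 < 3 ∧ p.2 < n := Iff.rfl

section Coloring

variable {α : Type*} {S T : Set (ℕ × ℕ)} {c : ℕ × ℕ → α}

def IsRainbowAPFreeOn (S : Set (ℕ × ℕ)) (c : ℕ × ℕ → α) : Prop :=
  ∀ ⦃p⦄, p ∈ S → ∀ ⦃q⦄, q ∈ S → ∀ ⦃r⦄, r ∈ S → taxicabDist p q = taxicabDist q r →
    c p = c q ∨ c q = c r ∨ c p = c r

def TakesThreeValuesOn (S : Set (ℕ × ℕ)) (c : ℕ × ℕ → α) : Prop :=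
  ∀ γ δ : α, ∃ p ∈ S, c p ≠ γ ∧ c p ≠ δ

lemma IsRainbowAPFreeOn.comp {f : ℕ × ℕ → ℕ × ℕ} (h : IsRainbowAPFreeOn S c)
    (hf : Set.MapsTo f T S) (hiso : ∀ p ∈ T, ∀ q ∈ T, taxicabDist (f p) (f q) = taxicabDist p q) :
    IsRainbowAPFreeOn T (c ∘ f) := fun p hp q hq r hr hd =>
  h (hf hp) (hf hq) (hf hr) (by rw [hiso p hp q hq, hiso q hq r hr, hd])

lemma TakesThreeValuesOn.comp {f : ℕ × ℕ → ℕ × ℕ} (h : TakesThreeValuesOn S c)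
    (hf : Set.SurjOn f T S) : TakesThreeValuesOn T (c ∘ f) := fun γ δ => by
  obtain ⟨_, hp, hγ, hδ⟩ := h γ δ
  obtain ⟨q, hq, rfl⟩ := hf hp
  exact ⟨q, hq, hγ, hδ⟩

lemma TakesThreeValuesOn.not_forall {γ δ : α} (h : TakesThreeValuesOn S c) :
    ¬ ∀ p ∈ S, c p = γ ∨ c p = δ := fun hall => by
  obtain ⟨p, hp, hγ, hδ⟩ := h γ δ
  exact (hall p hp).elim hγ hδ

end Coloring

section Grid

variable {α : Type*} {n : ℕ} {c : ℕ × ℕ → α} {γ δ : α} {p q r : ℕ × ℕ}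

lemma IsRainbowAPFreeOn.mid_eq_or_eq (h : IsRainbowAPFreeOn (grid3 n) c) (hγδ : γ ≠ δ)
    (hp : c p = γ) (hr : c r = δ)
    (hAP : p ∈ grid3 n ∧ q ∈ grid3 n ∧ r ∈ grid3 n ∧ taxicabDist p q = taxicabDist q r := by
      simp [taxicabDist, Nat.dist] <;> omega) :
    c q = γ ∨ c q = δ := by
  obtain ⟨hp', hq', hr', hd⟩ := hAP
  rcases h hp' hq' hr' hd with e | e | e
  · exact .inl (e ▸ hp)
  · exact .inr (e ▸ hr)
  · exact absurd (hp ▸ hr ▸ e) hγδ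

lemma IsRainbowAPFreeOn.end_eq_or_eq (h : IsRainbowAPFreeOn (grid3 n) c) (hγδ : γ ≠ δ)
    (hq : c q = γ) (hr : c r = δ)
    (hAP : p ∈ grid3 n ∧ q ∈ grid3 n ∧ r ∈ grid3 n ∧ taxicabDist p q = taxicabDist q r := by
      simp [taxicabDist, Nat.dist] <;> omega) :
    c p = γ ∨ c p = δ := by
  obtain ⟨hp', hq', hr', hd⟩ := hAP
  rcases h hp' hq' hr' hd with e | e | e
  · exact .inl (e ▸ hq)
  · exact absurd (hq ▸ hr ▸ e) hγδ
  · exact .inr (e ▸ hr)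

def flipRows (p : ℕ × ℕ) : ℕ × ℕ := (2 - p.1, p.2)

def flipCols (n : ℕ) (p : ℕ × ℕ) : ℕ × ℕ := (p.1, n - 1 - p.2)

structure IsEndColor (n : ℕ) (c : ℕ × ℕ → α) (γ : α) : Prop where
  rainbowAPFree : IsRainbowAPFreeOn (grid3 n) c
  takesThreeValues : TakesThreeValuesOn (grid3 n) c
  ne_of_interior : ∀ i j, i < 3 → 0 < j → j + 1 < n → c (i, j) ≠ γ

namespace IsEndColor

lemma comp_flipRows (h : IsEndColor n c γ) : IsEndColor n (c ∘ flipRows) γ where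
  rainbowAPFree := h.rainbowAPFree.comp (fun p hp => by simp only [mem_grid3, flipRows] at *; omega)
    (fun p hp q hq => by simp only [mem_grid3, flipRows, taxicabDist, Nat.dist] at *; omega)
  takesThreeValues := h.takesThreeValues.comp fun p hp =>
    ⟨flipRows p, by simp only [mem_grid3, flipRows] at *; omega,
      by simp only [mem_grid3] at hp; ext <;> simp only [flipRows]; omega⟩
  ne_of_interior i j hi hj hjn := h.ne_of_interior (2 - i) j (by omega) hj hjn

lemma comp_flipCols (h : IsEndColor n c γ) : IsEndColor n (c ∘ flipCols n) γ where
  rainbowAPFree := h.rainbowAPFree.comp (fun p hp => by simp only [mem_grid3, flipCols] at *; omega)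
    (fun p hp q hq => by simp only [mem_grid3, flipCols, taxicabDist, Nat.dist] at *; omega)
  takesThreeValues := h.takesThreeValues.comp fun p hp =>
    ⟨flipCols n p, by simp only [mem_grid3, flipCols] at *; omega,
      by simp only [mem_grid3] at hp; ext <;> simp only [flipCols]; omega⟩
  ne_of_interior i j hi hj hjn := h.ne_of_interior i (n - 1 - j) hi (by omega) (by omega)

lemma apply_one_zero_ne (h : IsEndColor n c γ) (hn : 3 ≤ n) : c (1, 0) ≠ γ := by
  intro h10
  obtain ⟨δ, h01⟩ : ∃ δ, c (0, 1) = δ := ⟨_, rfl⟩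
  have hγδ : γ ≠ δ := fun e => h.ne_of_interior 0 1 (by omega) one_pos (by omega) (e ▸ h01)
  have h21 : c (2, 1) = δ := (h.rainbowAPFree.mid_eq_or_eq hγδ h10 h01).resolve_left
    (h.ne_of_interior 2 1 (by omega) one_pos (by omega))
  -- every cell other than (1,0) is the midpoint of an AP from (1,0) to (0,1) or to (2,1)
  refine h.takesThreeValues.not_forall (γ := γ) (δ := δ) fun ⟨i, j⟩ hij => ?_
  obtain ⟨hi, hj⟩ : i < 3 ∧ j < n := hij
  rcases Nat.eq_zero_or_pos j with rfl | hj0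
  · interval_cases i
    · exact h.rainbowAPFree.mid_eq_or_eq hγδ h10 h01
    · exact .inl h10
    · exact h.rainbowAPFree.mid_eq_or_eq hγδ h10 h21
  · interval_cases i
    · exact h.rainbowAPFree.mid_eq_or_eq hγδ h10 h21
    · exact h.rainbowAPFree.mid_eq_or_eq hγδ h10 h01
    · exact h.rainbowAPFree.mid_eq_or_eq hγδ h10 h01

lemma apply_one_ne (h : IsEndColor n c γ) (hn : 3 ≤ n) {j : ℕ} (hj : j < n) : c (1, j) ≠ γ := by
  rcases Nat.eq_zero_or_pos j with rfl | hj0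
  · exact h.apply_one_zero_ne hn
  by_cases hjn : j + 1 < n
  · exact h.ne_of_interior 1 j (by omega) hj0 hjn
  · have := h.comp_flipCols.apply_one_zero_ne hn
    rwa [comp_apply, flipCols, show n - 1 - 0 = j by omega] at this

lemma apply_zero_eq_or_eq (h : IsEndColor n c γ) (hn : 3 ≤ n) (h00 : c (0, 0) = γ) {j : ℕ}
    (hj : j < n) : c (0, j) = γ ∨ c (0, j) = c (1, 1) := by
  rcases Nat.eq_zero_or_pos j with rfl | hj0
  · exact .inl h00
  · exact h.rainbowAPFree.mid_eq_or_eq (h.ne_of_interior 1 1 (by omega) one_pos (by omega)).symm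
      h00 rfl

lemma apply_two_zero_ne (h : IsEndColor n c γ) (hn : 3 ≤ n) (h00 : c (0, 0) = γ)
    (h10 : c (1, 0) = c (1, 1)) : c (2, 0) ≠ γ := by
  intro h20
  have hγδ : γ ≠ c (1, 1) := (h.ne_of_interior 1 1 (by omega) one_pos (by omega)).symm
  refine h.takesThreeValues.not_forall (γ := γ) (δ := c (1, 1)) fun ⟨i, j⟩ hij => ?_
  obtain ⟨hi, hj⟩ : i < 3 ∧ j < n := hij
  interval_cases i
  · exact h.apply_zero_eq_or_eq hn h00 hj
  · rcases Nat.lt_or_ge j 2 with hj2 | hj2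
    · interval_cases j
      · exact .inr h10
      · exact .inr rfl
    · have h0j : c (0, j - 1) = c (1, 1) := (h.apply_zero_eq_or_eq hn h00 (by omega)).resolve_left
        (h.ne_of_interior 0 (j - 1) (by omega) (by omega) (by omega))
      exact h.rainbowAPFree.end_eq_or_eq hγδ h20 h0j
  · exact h.comp_flipRows.apply_zero_eq_or_eq hn h20 hj

lemma apply_two_zero_ne_apply_one_one (h : IsEndColor n c γ) (hn : 3 ≤ n) (hodd : Odd n)
    (h00 : c (0, 0) = γ) : c (2, 0) ≠ c (1, 1) := by
  intro h20
  obtain ⟨δ, h11⟩ : ∃ δ, c (1, 1) = δ := ⟨_, rfl⟩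
  rw [h11] at h20
  have hγδ : γ ≠ δ := h11 ▸ (h.ne_of_interior 1 1 (by omega) one_pos (by omega)).symm
  have hmiddle : ∀ j < n, c (1, j) = δ := fun j hj =>
    (h.rainbowAPFree.mid_eq_or_eq hγδ h00 h20).resolve_left (h.apply_one_ne hn hj)
  obtain ⟨⟨i, j⟩, hij, hγ, hδ⟩ := h.takesThreeValues γ δ
  obtain ⟨hi, hj⟩ : i < 3 ∧ j < n := hij
  interval_cases i
  · exact (h11 ▸ h.apply_zero_eq_or_eq hn h00 hj).elim hγ hδ
  · exact hδ (hmiddle j hj)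
  rcases Nat.eq_zero_or_pos j with rfl | hj0
  · exact hδ h20
  -- (2, j) is the end of an AP with (0, 0) and a middle-row cell; for odd j this uses odd n
  rcases Nat.even_or_odd j with ⟨m, rfl⟩ | hjodd
  · exact (h.rainbowAPFree.end_eq_or_eq hγδ.symm (hmiddle m (by omega)) h00
      (p := (2, m + m))).elim hδ hγ
  · rw [Nat.odd_iff] at hodd hjodd
    exact (h.rainbowAPFree.end_eq_or_eq hγδ h00 (hmiddle (j + 1) (by omega))).elim hγ hδ

lemma apply_zero_zero_ne (h : IsEndColor n c γ) (hn : 3 ≤ n) (hodd : Odd n) :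
    c (0, 0) ≠ γ := by
  intro h00
  have hγδ : γ ≠ c (1, 1) := (h.ne_of_interior 1 1 (by omega) one_pos (by omega)).symm
  have h10 : c (1, 0) = c (1, 1) := (h.rainbowAPFree.mid_eq_or_eq hγδ h00 rfl).resolve_left
    (h.apply_one_zero_ne hn)
  rcases (h.rainbowAPFree.mid_eq_or_eq hγδ h00 rfl : c (2, 0) = γ ∨ c (2, 0) = c (1, 1))
    with h20 | h20
  · exact h.apply_two_zero_ne hn h00 h10 h20
  · exact h.apply_two_zero_ne_apply_one_one hn hodd h00 h20

lemma apply_ne (h : IsEndColor n c γ) (hn : 3 ≤ n) (hodd : Odd n) {p : ℕ × ℕ}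
    (hp : p ∈ grid3 n) : c p ≠ γ := by
  obtain ⟨i, j⟩ := p
  obtain ⟨hi, hj⟩ : i < 3 ∧ j < n := hp
  have hleft : ∀ {c : ℕ × ℕ → α}, IsEndColor n c γ → c (i, 0) ≠ γ := fun h => by
    interval_cases i
    · exact h.apply_zero_zero_ne hn hodd
    · exact h.apply_one_zero_ne hn
    · exact h.comp_flipRows.apply_zero_zero_ne hn hodd
  rcases Nat.eq_zero_or_pos j with rfl | hj0
  · exact hleft h
  by_cases hjn : j + 1 < n
  · exact h.ne_of_interior i j hi hj0 hjn
  · have := hleft h.comp_flipCols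
    rwa [comp_apply, flipCols, show n - 1 - 0 = j by omega] at this

end IsEndColor

end Grid

section Induction

variable {α : Type*}

lemma not_isRainbowAPFreeOn_grid3_one {c : ℕ × ℕ → α} (h3 : TakesThreeValuesOn (grid3 1) c) :
    ¬ IsRainbowAPFreeOn (grid3 1) c := by
  have hcol : ∀ p ∈ grid3 1, p = (0, 0) ∨ p = (1, 0) ∨ p = (2, 0) := by
    rintro ⟨i, j⟩ hij
    obtain ⟨hi, hj⟩ : i < 3 ∧ j < 1 := hij
    interval_cases i <;> interval_cases j <;> simp
  intro hrf
  rcases hrf (p := (0, 0)) (q := (1, 0)) (r := (2, 0)) (by simp) (by simp) (by simp) rfl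
    with e | e | e
  · refine h3.not_forall (γ := c (0, 0)) (δ := c (2, 0)) fun p hp => ?_
    rcases hcol p hp with rfl | rfl | rfl <;> simp [e]
  all_goals
    refine h3.not_forall (γ := c (0, 0)) (δ := c (1, 0)) fun p hp => ?_
    rcases hcol p hp with rfl | rfl | rfl <;> simp [e]

theorem not_isRainbowAPFreeOn_grid3 {n : ℕ} {c : ℕ × ℕ → α} (hn : Odd n)
    (h3 : TakesThreeValuesOn (grid3 n) c) : ¬ IsRainbowAPFreeOn (grid3 n) c := by
  obtain ⟨k, rfl⟩ := hn
  induction k generalizing c with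
  | zero => exact not_isRainbowAPFreeOn_grid3_one h3
  | succ k ih =>
    intro hrf
    let shift : ℕ × ℕ → ℕ × ℕ := fun p => (p.1, p.2 + 1)
    by_cases hinner : TakesThreeValuesOn (grid3 (2 * k + 1)) (c ∘ shift)
    · refine ih hinner (hrf.comp (fun p hp => ?_) fun p _ q _ => ?_)
      · simp only [mem_grid3, shift] at *; omega
      · simp only [taxicabDist, Nat.dist, shift]; omega
    simp only [TakesThreeValuesOn, not_forall, not_exists, not_and, not_not] at hinner
    obtain ⟨γ₀, δ₀, hinner⟩ := hinner
    obtain ⟨p, hp, hγ₀, hδ₀⟩ := h3 γ₀ δ₀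
    refine IsEndColor.apply_ne ⟨hrf, h3, fun i j hi hj0 hjn hij => ?_⟩ (by omega) (by simp) hp rfl
    have := hinner (i, j - 1) (by simp only [mem_grid3]; omega)
    simp only [comp_apply, shift, Nat.sub_add_cancel hj0, hij] at this
    exact hδ₀ (this hγ₀)

end Induction

def ofGrid (n : ℕ) [NeZero n] (p : ℕ × ℕ) : Fin 3 × Fin n := (Fin.ofNat 3 p.1, Fin.ofNat n p.2)

section Bridge

variable {n : ℕ} [NeZero n]

lemma dist_ofGrid {p q : ℕ × ℕ} (hp : p ∈ grid3 n) (hq : q ∈ grid3 n) :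
    (pathGraph 3 □ pathGraph n).dist (ofGrid n p) (ofGrid n q) = taxicabDist p q := by
  rw [dist_boxProd (pathGraph_preconnected 3) (pathGraph_preconnected n),
    pathGraph_dist, pathGraph_dist]
  simp only [ofGrid, Fin.val_ofNat, Nat.mod_eq_of_lt hp.1, Nat.mod_eq_of_lt hp.2,
    Nat.mod_eq_of_lt hq.1, Nat.mod_eq_of_lt hq.2, taxicabDist]

lemma hasRainbowAP_of_not_isRainbowAPFreeOn {α : Type*} {c : Fin 3 × Fin n → α}
    (h : ¬ IsRainbowAPFreeOn (grid3 n) (c ∘ ofGrid n)) :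
    HasRainbowAP (pathGraph 3 □ pathGraph n) 3 c := by
  simp only [IsRainbowAPFreeOn, not_forall, not_or] at h
  obtain ⟨p, hp, q, hq, r, hr, hd, hpq, hqr, hpr⟩ := h
  exact hasRainbowAP_three (by rwa [dist_ofGrid hp hq, dist_ofGrid hq hr]) hpq hqr hpr

lemma takesThreeValuesOn_comp_ofGrid {c : Fin 3 × Fin n → Fin 3} (hc : Surjective c) :
    TakesThreeValuesOn (grid3 n) (c ∘ ofGrid n) := by
  intro γ δ
  obtain ⟨ε, hεγ, hεδ⟩ : ∃ ε : Fin 3, ε ≠ γ ∧ ε ≠ δ := by revert γ δ; decide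
  obtain ⟨x, rfl⟩ := hc ε
  have hx : ofGrid n (x.1, x.2) = x := by ext <;> simp [ofGrid]
  exact ⟨(x.1, x.2), ⟨x.1.2, x.2.2⟩, by rwa [comp_apply, hx], by rwa [comp_apply, hx]⟩

end Bridge

theorem aw_p3_podd_general (k : ℕ) :
    aw (pathGraph 3 □ pathGraph (2 * k + 1)) 3 = 3 :=
  aw_eq_self three_pos (by simp; omega) fun _ hc => hasRainbowAP_of_not_isRainbowAPFreeOn <|
    not_isRainbowAPFreeOn_grid3 (odd_two_mul_add_one k) (takesThreeValuesOn_comp_ofGrid hc)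

/-- for every `k ≥ 1`, `aw(P_3 □ P_{2k+1}, 3) = 3`. -/
theorem aw_p3_podd (k : ℕ) (hk : 1 ≤ k) :
    aw (pathGraph 3 □ pathGraph (2 * k + 1)) 3 = 3 :=
  aw_p3_podd_general k
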